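/- In the language Ref², termination similarity ≼ is a congruence on (Rd, Wr), and hence so is its symmetrization ≡ = ≼ ∩ ≽: both relations are compatible with all constructors of Ref². -/
import Mathlib


/-! # Statement 18: termination similarity and its symmetrization are congruences on Ref² -/
namespace RefLang

/-- Expressions of Ref² over the set `Loc` of locations. -/
inductive RExp (Loc : Type) : Type
  | loc : Loc → RExp Loc
  | int : ℤ → RExp Loc
  | deref : RExp Loc → RExp Loc
  | add : RExp Loc → RExp Loc → RExp Loc
  | sub : RExp Loc → RExp Loc → RExp Loc

mutual
/-- Readers of Ref². -/
inductive Rd (Loc : Type) : Type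
  | skip : Rd Loc
  | whileE : RExp Loc → Rd Loc → Rd Loc
  /-- `e := p` -/
  | assign : RExp Loc → Rd Loc → Rd Loc
  /-- `if e then p else q` -/
  | ite : RExp Loc → Rd Loc → Rd Loc → Rd Loc
  | seq : Rd Loc → Rd Loc → Rd Loc
  /-- `&p` -/
  | ref : Rd Loc → Rd Loc
  | expr : RExp Loc → Rd Loc
  | proc : Rd Loc → Rd Loc
/-- Writers of Ref².  Here values are elements of `V(Rd) = Loc ⊕ ℤ ⊕ Rd Loc` and
stores are partial maps `Loc → Option (V(Rd))`. -/
inductive Wr (Loc : Type) : Type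
  /-- `e := c` -/
  | assignW : RExp Loc → Wr Loc → Wr Loc
  /-- `c ; q` -/
  | seqW : Wr Loc → Rd Loc → Wr Loc
  /-- `&c` -/
  | refW : Wr Loc → Wr Loc
  /-- `s.c` -/
  | outW : (Loc → Option (Loc ⊕ ℤ ⊕ Rd Loc)) → Wr Loc → Wr Loc
  /-- `[p]_s` -/
  | runW : Rd Loc → (Loc → Option (Loc ⊕ ℤ ⊕ Rd Loc)) → Wr Loc
  /-- `ret_{v,s}` -/
  | retV : (Loc ⊕ ℤ ⊕ Rd Loc) → (Loc → Option (Loc ⊕ ℤ ⊕ Rd Loc)) → Wr Loc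
  /-- `ret_s` -/
  | retS : (Loc → Option (Loc ⊕ ℤ ⊕ Rd Loc)) → Wr Loc
end

/-- Values `V(Rd)`. -/
abbrev Val (Loc : Type) : Type := Loc ⊕ ℤ ⊕ Rd Loc

/-- Stores `𝒮(Rd)`: partial maps from locations to values. -/
abbrev St (Loc : Type) : Type := Loc → Option (Val Loc)

variable {Loc : Type}

open Classical in
/-- Store update `s[l ↦ v]`. -/
noncomputable def updS (s : St Loc) (l : Loc) (v : Val Loc) : St Loc :=
  fun l' => if l' = l then some v else s l'

/-- Partial expression evaluation `eev : 𝒮(Rd) × Ex ⇀ V(Rd)`. -/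
def eev (s : St Loc) : RExp Loc → Option (Val Loc)
  | .loc l => some (.inl l)
  | .int n => some (.inr (.inl n))
  | .deref e =>
      match eev s e with
      | some (.inl l) => s l
      | _ => none
  | .add e₁ e₂ =>
      match eev s e₁, eev s e₂ with
      | some (.inr (.inl n₁)), some (.inr (.inl n₂)) => some (.inr (.inl (n₁ + n₂)))
      | _, _ => none
  | .sub e₁ e₂ =>
      match eev s e₁, eev s e₂ with
      | some (.inr (.inl n₁)), some (.inr (.inl n₂)) => some (.inr (.inl (n₁ - n₂)))
      | _, _ => none

/-- The reader semantics of Ref²: `rstep p s = some c` means `p,s → c` (there is at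
most one transition from each `p,s`; `none` means `p` is stuck at `s`). -/
def rstep : Rd Loc → St Loc → Option (Wr Loc)
  | .skip, s => some (.retS s)
  | .whileE e p, s =>
      match eev s e with
      | some (.inr (.inl n)) =>
          if n = 0 then some (.retS s)
          else some (.outW s (.runW (.seq p (.whileE e p)) s))
      | _ => none
  | .assign e p, s => some (.assignW e (.runW p s))
  | .ite e p q, s =>
      match eev s e with
      | some (.inr (.inl n)) =>
          if n = 0 then some (.outW s (.runW q s)) else some (.outW s (.runW p s))
      | _ => none
  | .seq p q, s => some (.seqW (.runW p s) q)
  | .ref p, s => some (.refW (.runW p s))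
  | .expr e, s =>
      match eev s e with
      | some (.inr (.inr p)) => some (.outW s (.runW p s))
      | some v => some (.retV v s)
      | none => none
  | .proc p, s => some (.retV (.inr (.inr p)) s)

/-- Labels of writer transitions: `tau d` is `c → d`, `out s d` is `c →ˢ d`,
`dn s` is `c ↓ s`, and `dnV v s` is `c ↓ v,s`. -/
inductive WLab (Loc : Type) : Type
  | tau : Wr Loc → WLab Loc
  | out : St Loc → Wr Loc → WLab Loc
  | dn : St Loc → WLab Loc
  | dnV : Val Loc → St Loc → WLab Loc

/-- The writer semantics of Ref², as an inductively defined (nondeterministic)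
labelled transition relation. -/
inductive WTr : Wr Loc → WLab Loc → Prop
  | runW {p : Rd Loc} {s c} : rstep p s = some c → WTr (.runW p s) (.tau c)
  | retV {v : Val Loc} {s} : WTr (.retV v s) (.dnV v s)
  | retS {s : St Loc} : WTr (.retS s) (.dn s)
  | outW {s : St Loc} {c} : WTr (.outW s c) (.out s c)
  | refTau {c d : Wr Loc} : WTr c (.tau d) → WTr (.refW c) (.tau (.refW d))
  | refOut {c d : Wr Loc} {s} : WTr c (.out s d) → WTr (.refW c) (.out s (.refW d))
  | refDn {c : Wr Loc} {v s l} :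
      WTr c (.dnV v s) → s l = none → WTr (.refW c) (.dnV (.inl l) (updS s l v))
  | seqTau {c d : Wr Loc} {q} : WTr c (.tau d) → WTr (.seqW c q) (.tau (.seqW d q))
  | seqOut {c d : Wr Loc} {s q} :
      WTr c (.out s d) → WTr (.seqW c q) (.out s (.seqW d q))
  | seqDnV {c : Wr Loc} {v s q} :
      WTr c (.dnV v s) → WTr (.seqW c q) (.out s (.runW q s))
  | seqDn {c : Wr Loc} {s q} : WTr c (.dn s) → WTr (.seqW c q) (.tau (.runW q s))
  | asgTau {e} {c d : Wr Loc} :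
      WTr c (.tau d) → WTr (.assignW e c) (.tau (.assignW e d))
  | asgOut {e} {c d : Wr Loc} {s} :
      WTr c (.out s d) → WTr (.assignW e c) (.out s (.assignW e d))
  | asgDn {e} {c : Wr Loc} {v s l} :
      eev s e = some (.inl l) → WTr c (.dnV v s) →
      WTr (.assignW e c) (.dn (updS s l v))

/-- A single (silent or output) writer step. -/
def Step1 (c d : Wr Loc) : Prop := WTr c (.tau d) ∨ ∃ s, WTr c (.out s d)

/-- The weak transition `c ⇒ d`: a finite chain of `→` and `→ˢ` steps. -/
def Wk : Wr Loc → Wr Loc → Prop := Relation.ReflTransGen Step1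

/-- `c ⇓ s`: `c ⇒ c' ↓ s` for some `c'`. -/
def BigS (c : Wr Loc) (s : St Loc) : Prop := ∃ c', Wk c c' ∧ WTr c' (.dn s)

/-- `c ⇓ v,s`: `c ⇒ c' ↓ v,s` for some `c'`. -/
def BigV (c : Wr Loc) (v : Val Loc) (s : St Loc) : Prop :=
  ∃ c', Wk c c' ∧ WTr c' (.dnV v s)

/-- `c ⇓`: the writer `c` terminates. -/
def ConvW (c : Wr Loc) : Prop := (∃ v s, BigV c v s) ∨ (∃ s, BigS c s)

/-- `p,s ⇓`: the reader `p` terminates on the input store `s`. -/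
def ConvR (p : Rd Loc) (s : St Loc) : Prop := ∃ c, rstep p s = some c ∧ ConvW c

/-- The relational lifting `V(R_r) = Δ_Loc ∪ Δ_ℤ ∪ R_r` on values. -/
def VRel (Rr : Rd Loc → Rd Loc → Prop) : Val Loc → Val Loc → Prop
  | .inl l, .inl l' => l = l'
  | .inr (.inl n), .inr (.inl n') => n = n'
  | .inr (.inr p), .inr (.inr p') => Rr p p'
  | _, _ => False

/-- The relational lifting `𝒮(R_r)` on stores: equal domains and `V(R_r)`-related
values at every defined location. -/
def SRel (Rr : Rd Loc → Rd Loc → Prop) (s₁ s₂ : St Loc) : Prop :=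
  ∀ l, (s₁ l = none ∧ s₂ l = none) ∨
    ∃ v₁ v₂, s₁ l = some v₁ ∧ s₂ l = some v₂ ∧ VRel Rr v₁ v₂

end RefLang
namespace RefLang

variable {Loc : Type}

/-- A (higher-order) termination simulation on Ref². -/
def IsTermSim (Rr : Rd Loc → Rd Loc → Prop) (Rw : Wr Loc → Wr Loc → Prop) : Prop :=
  (∀ p q s c, Rr p q → rstep p s = some c → ∃ d, rstep q s = some d ∧ Rw c d) ∧
  (∀ c d c', Rw c d → (WTr c (.tau c') ∨ ∃ s, WTr c (.out s c')) →
      ∃ d', Wk d d' ∧ Rw c' d') ∧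
  (∀ c d s, Rw c d → WTr c (.dn s) → ∃ s', BigS d s' ∧ SRel Rr s s') ∧
  (∀ c d v s, Rw c d → WTr c (.dnV v s) →
      ∃ v' s', BigV d v' s' ∧ VRel Rr v v' ∧ SRel Rr s s')

/-- Termination similarity `≼_r` on readers: the greatest termination simulation
(the union of all termination simulations). -/
def SimR (p q : Rd Loc) : Prop := ∃ Rr Rw, IsTermSim Rr Rw ∧ Rr p q

/-- Termination similarity `≼_w` on writers. -/
def SimW (c d : Wr Loc) : Prop := ∃ Rr Rw, IsTermSim Rr Rw ∧ Rw c d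

/-- The symmetrization `≡_r = ≼_r ∩ ≽_r` of termination similarity on readers. -/
def EqvR (p q : Rd Loc) : Prop := SimR p q ∧ SimR q p

/-- The symmetrization `≡_w = ≼_w ∩ ≽_w` of termination similarity on writers. -/
def EqvW (c d : Wr Loc) : Prop := SimW c d ∧ SimW d c

end RefLang
namespace RefLang

variable {Loc : Type}

/-- A two-sorted relation on `(Rd, Wr)` is adequate if related readers terminate on
the same input stores and related writers either both terminate or both diverge. -/
def IsAdequate (Rr : Rd Loc → Rd Loc → Prop) (Rw : Wr Loc → Wr Loc → Prop) : Prop :=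
  (∀ p q, Rr p q → ∀ s, (ConvR p s ↔ ConvR q s)) ∧
  (∀ c d, Rw c d → (ConvW c ↔ ConvW d))

/-- A two-sorted relation on `(Rd, Wr)` is a congruence if it is compatible with
all constructors of Ref². -/
def IsCongrRef (Rr : Rd Loc → Rd Loc → Prop) (Rw : Wr Loc → Wr Loc → Prop) : Prop :=
  (∀ p p' q q', Rr p p' → Rr q q' → Rr (.seq p q) (.seq p' q')) ∧
  (∀ e p p', Rr p p' → Rr (.whileE e p) (.whileE e p')) ∧
  (∀ e p p' q q', Rr p p' → Rr q q' → Rr (.ite e p q) (.ite e p' q')) ∧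
  (∀ e p p', Rr p p' → Rr (.assign e p) (.assign e p')) ∧
  (∀ p p', Rr p p' → Rr (.ref p) (.ref p')) ∧
  (∀ p p', Rr p p' → Rr (.proc p) (.proc p')) ∧
  Rr .skip .skip ∧
  (∀ e, Rr (.expr e) (.expr e)) ∧
  (∀ c c' q q', Rw c c' → Rr q q' → Rw (.seqW c q) (.seqW c' q')) ∧
  (∀ e c c', Rw c c' → Rw (.assignW e c) (.assignW e c')) ∧
  (∀ c c', Rw c c' → Rw (.refW c) (.refW c')) ∧
  (∀ s s' c c', SRel Rr s s' → Rw c c' → Rw (.outW s c) (.outW s' c')) ∧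
  (∀ p p' s s', Rr p p' → SRel Rr s s' → Rw (.runW p s) (.runW p' s')) ∧
  (∀ v v' s s', VRel Rr v v' → SRel Rr s s' → Rw (.retV v s) (.retV v' s')) ∧
  (∀ s s', SRel Rr s s' → Rw (.retS s) (.retS s'))

end RefLang

namespace RefLang

variable {Loc : Type}

section Congr

/-! ## Basic lemmas on the relational liftings -/

theorem VRel_mono {Rr Rr' : Rd Loc → Rd Loc → Prop}
    (h : ∀ p q, Rr p q → Rr' p q) :
    ∀ {v v' : Val Loc}, VRel Rr v v' → VRel Rr' v v' := by
  rintro (l | n | p) (l' | n' | p') hv <;> simp_all [VRel]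

theorem SRel_mono {Rr Rr' : Rd Loc → Rd Loc → Prop}
    (h : ∀ p q, Rr p q → Rr' p q) {s s' : St Loc}
    (hs : SRel Rr s s') : SRel Rr' s s' := by
  intro l
  rcases hs l with ⟨h1, h2⟩ | ⟨v, v', h1, h2, hv⟩
  · exact Or.inl ⟨h1, h2⟩
  · exact Or.inr ⟨v, v', h1, h2, VRel_mono h hv⟩

theorem SRel_refl_of {Rr : Rd Loc → Rd Loc → Prop}
    (h : ∀ p, Rr p p) (s : St Loc) : SRel Rr s s := by
  intro l
  rcases hv : s l with _ | v
  · exact Or.inl ⟨rfl, rfl⟩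
  · refine Or.inr ⟨v, v, rfl, rfl, ?_⟩
    rcases v with l | n | p <;> simp [VRel, h]

theorem SRel_updS {Rr : Rd Loc → Rd Loc → Prop} {s s' : St Loc}
    (hs : SRel Rr s s') {v v' : Val Loc} (hv : VRel Rr v v') (l : Loc) :
    SRel Rr (updS s l v) (updS s' l v') := by
  intro l'
  by_cases hl : l' = l
  · exact Or.inr ⟨v, v', by simp [updS, hl], by simp [updS, hl], hv⟩
  · rcases hs l' with ⟨h1, h2⟩ | ⟨w, w', h1, h2, hw⟩
    · exact Or.inl ⟨by simp [updS, hl, h1], by simp [updS, hl, h2]⟩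
    · exact Or.inr ⟨w, w', by simp [updS, hl, h1], by simp [updS, hl, h2], hw⟩

/-- Transport of expression evaluation along related stores. -/
theorem eev_rel {Rr : Rd Loc → Rd Loc → Prop} {s s' : St Loc}
    (hs : SRel Rr s s') :
    ∀ e : RExp Loc, (eev s e = none ∧ eev s' e = none) ∨
      ∃ v v', eev s e = some v ∧ eev s' e = some v' ∧ VRel Rr v v'
  | .loc l => Or.inr ⟨.inl l, .inl l, rfl, rfl, rfl⟩
  | .int n => Or.inr ⟨.inr (.inl n), .inr (.inl n), rfl, rfl, rfl⟩
  | .deref e => by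
      rcases eev_rel hs e with ⟨h1, h2⟩ | ⟨v, v', h1, h2, hv⟩
      · exact Or.inl ⟨by simp [eev, h1], by simp [eev, h2]⟩
      · rcases v with l | n | p <;> rcases v' with l' | n' | p' <;> simp [VRel] at hv
        · subst hv
          rcases hs l with ⟨h3, h4⟩ | ⟨w, w', h3, h4, hw⟩
          · exact Or.inl ⟨by simp [eev, h1, h3], by simp [eev, h2, h4]⟩
          · exact Or.inr ⟨w, w', by simp [eev, h1, h3], by simp [eev, h2, h4], hw⟩
        · exact Or.inl ⟨by simp [eev, h1], by simp [eev, h2]⟩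
        · exact Or.inl ⟨by simp [eev, h1], by simp [eev, h2]⟩
  | .add e₁ e₂ => by
      rcases eev_rel hs e₁ with ⟨a1, a2⟩ | ⟨v, v', a1, a2, hv⟩
      · exact Or.inl ⟨by simp [eev, a1], by simp [eev, a2]⟩
      rcases eev_rel hs e₂ with ⟨b1, b2⟩ | ⟨w, w', b1, b2, hw⟩
      · rcases v with l | n | p <;> rcases v' with l' | n' | p' <;> simp [VRel] at hv <;>
          exact Or.inl ⟨by simp [eev, a1, b1], by simp [eev, a2, b2]⟩
      rcases v with l | n | p <;> rcases v' with l' | n' | p' <;> simp [VRel] at hv <;>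
        rcases w with k | m | q <;> rcases w' with k' | m' | q' <;> simp [VRel] at hw <;>
          first
          | (refine Or.inl ⟨?_, ?_⟩ <;> simp [eev, a1, a2, b1, b2] <;> done)
          | (subst hv; subst hw;
             refine Or.inr ⟨.inr (.inl (n + m)), .inr (.inl (n + m)), ?_, ?_, ?_⟩ <;>
               simp [eev, VRel, a1, a2, b1, b2] <;> done)
  | .sub e₁ e₂ => by
      rcases eev_rel hs e₁ with ⟨a1, a2⟩ | ⟨v, v', a1, a2, hv⟩
      · exact Or.inl ⟨by simp [eev, a1], by simp [eev, a2]⟩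
      rcases eev_rel hs e₂ with ⟨b1, b2⟩ | ⟨w, w', b1, b2, hw⟩
      · rcases v with l | n | p <;> rcases v' with l' | n' | p' <;> simp [VRel] at hv <;>
          exact Or.inl ⟨by simp [eev, a1, b1], by simp [eev, a2, b2]⟩
      rcases v with l | n | p <;> rcases v' with l' | n' | p' <;> simp [VRel] at hv <;>
        rcases w with k | m | q <;> rcases w' with k' | m' | q' <;> simp [VRel] at hw <;>
          first
          | (refine Or.inl ⟨?_, ?_⟩ <;> simp [eev, a1, a2, b1, b2] <;> done)
          | (subst hv; subst hw;
             refine Or.inr ⟨.inr (.inl (n - m)), .inr (.inl (n - m)), ?_, ?_, ?_⟩ <;>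
               simp [eev, VRel, a1, a2, b1, b2] <;> done)

/-! ## Similarity is itself a termination simulation -/

theorem simR_of {Rr Rw} (h : IsTermSim Rr Rw) {p q : Rd Loc} (hr : Rr p q) :
    SimR p q := ⟨Rr, Rw, h, hr⟩

theorem simW_of {Rr Rw} (h : IsTermSim Rr Rw) {c d : Wr Loc} (hw : Rw c d) :
    SimW c d := ⟨Rr, Rw, h, hw⟩

theorem sim_isSim : IsTermSim (SimR (Loc := Loc)) SimW := by
  refine ⟨?_, ?_, ?_, ?_⟩
  · rintro p q s c ⟨Rr, Rw, hsim, hr⟩ hst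
    obtain ⟨d, hd, hw⟩ := hsim.1 p q s c hr hst
    exact ⟨d, hd, simW_of hsim hw⟩
  · rintro c d c' ⟨Rr, Rw, hsim, hw⟩ hst
    obtain ⟨d', h1, h2⟩ := hsim.2.1 c d c' hw hst
    exact ⟨d', h1, simW_of hsim h2⟩
  · rintro c d s ⟨Rr, Rw, hsim, hw⟩ hst
    obtain ⟨s', h1, h2⟩ := hsim.2.2.1 c d s hw hst
    exact ⟨s', h1, SRel_mono (fun _ _ hh => simR_of hsim hh) h2⟩
  · rintro c d v s ⟨Rr, Rw, hsim, hw⟩ hst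
    obtain ⟨v', s', h1, h2, h3⟩ := hsim.2.2.2 c d v s hw hst
    exact ⟨v', s', h1, VRel_mono (fun _ _ hh => simR_of hsim hh) h2,
      SRel_mono (fun _ _ hh => simR_of hsim hh) h3⟩

theorem simW_wk {c d c₂ : Wr Loc} (h : SimW c d) (hw : Wk c c₂) :
    ∃ d₂, Wk d d₂ ∧ SimW c₂ d₂ := by
  induction hw with
  | refl => exact ⟨d, .refl, h⟩
  | tail _ hstep ih =>
      obtain ⟨d₂, hwd, hsim⟩ := ih
      obtain ⟨d₃, hwd', hsim'⟩ := sim_isSim.2.1 _ _ _ hsim hstep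
      exact ⟨d₃, hwd.trans hwd', hsim'⟩

theorem simW_bigS {c d : Wr Loc} {s} (h : SimW c d) (hb : BigS c s) :
    ∃ s', BigS d s' ∧ SRel SimR s s' := by
  obtain ⟨c₂, hwk, hdn⟩ := hb
  obtain ⟨d₂, hwd, hsim⟩ := simW_wk h hwk
  obtain ⟨s', ⟨d₃, hwd', hdn'⟩, hsr⟩ := sim_isSim.2.2.1 _ _ _ hsim hdn
  exact ⟨s', ⟨d₃, hwd.trans hwd', hdn'⟩, hsr⟩

theorem simW_bigV {c d : Wr Loc} {v s} (h : SimW c d) (hb : BigV c v s) :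
    ∃ v' s', BigV d v' s' ∧ VRel SimR v v' ∧ SRel SimR s s' := by
  obtain ⟨c₂, hwk, hdn⟩ := hb
  obtain ⟨d₂, hwd, hsim⟩ := simW_wk h hwk
  obtain ⟨v', s', ⟨d₃, hwd', hdn'⟩, hv, hsr⟩ := sim_isSim.2.2.2 _ _ _ _ hsim hdn
  exact ⟨v', s', ⟨d₃, hwd.trans hwd', hdn'⟩, hv, hsr⟩

/-! ## The Howe-style congruence closure -/

/-- Howe-style congruence closure of `≼_r` on readers. -/
inductive CR : Rd Loc → Rd Loc → Prop
  | skip : CR .skip .skip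
  | expr (e) : CR (.expr e) (.expr e)
  | seq {p p' q q'} : CR p p' → CR q q' → CR (.seq p q) (.seq p' q')
  | whileE (e) {p p'} : CR p p' → CR (.whileE e p) (.whileE e p')
  | ite (e) {p p' q q'} : CR p p' → CR q q' → CR (.ite e p q) (.ite e p' q')
  | assign (e) {p p'} : CR p p' → CR (.assign e p) (.assign e p')
  | ref {p p'} : CR p p' → CR (.ref p) (.ref p')
  | proc {p p'} : CR p p' → CR (.proc p) (.proc p')
  | comp {p q r} : CR p q → SimR q r → CR p r

/-- Howe-style congruence closure of `≼_w` on writers. -/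
inductive CW : Wr Loc → Wr Loc → Prop
  | seqW {c c' q q'} : CW c c' → CR q q' → CW (.seqW c q) (.seqW c' q')
  | assignW (e) {c c'} : CW c c' → CW (.assignW e c) (.assignW e c')
  | refW {c c'} : CW c c' → CW (.refW c) (.refW c')
  | outW {s s' c c'} : SRel CR s s' → CW c c' → CW (.outW s c) (.outW s' c')
  | runW {p p' s s'} : CR p p' → SRel CR s s' → CW (.runW p s) (.runW p' s')
  | retV {v v' s s'} : VRel CR v v' → SRel CR s s' → CW (.retV v s) (.retV v' s')
  | retS {s s'} : SRel CR s s' → CW (.retS s) (.retS s')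
  | comp {c c' d} : CW c c' → SimW c' d → CW c d

theorem CR_refl : ∀ p : Rd Loc, CR p p
  | .skip => .skip
  | .whileE e p => .whileE e (CR_refl p)
  | .assign e p => .assign e (CR_refl p)
  | .ite e p q => .ite e (CR_refl p) (CR_refl q)
  | .seq p q => .seq (CR_refl p) (CR_refl q)
  | .ref p => .ref (CR_refl p)
  | .expr e => .expr e
  | .proc p => .proc (CR_refl p)

theorem SRel_CR_refl (s : St Loc) : SRel CR s s := SRel_refl_of CR_refl s

theorem VRel_CR_refl (v : Val Loc) : VRel CR v v := by
  rcases v with l | n | p <;> simp [VRel, CR_refl]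

theorem CW_refl : ∀ c : Wr Loc, CW c c
  | .assignW e c => .assignW e (CW_refl c)
  | .seqW c q => .seqW (CW_refl c) (CR_refl q)
  | .refW c => .refW (CW_refl c)
  | .outW s c => .outW (SRel_CR_refl s) (CW_refl c)
  | .runW p s => .runW (CR_refl p) (SRel_CR_refl s)
  | .retV v s => .retV (VRel_CR_refl v) (SRel_CR_refl s)
  | .retS s => .retS (SRel_CR_refl s)

theorem simR_le_CR {p q : Rd Loc} (h : SimR p q) : CR p q := (CR_refl p).comp h
theorem simW_le_CW {c d : Wr Loc} (h : SimW c d) : CW c d := (CW_refl c).comp h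

theorem VRel_comp {v₁ v₂ v₃ : Val Loc}
    (h1 : VRel CR v₁ v₂) (h2 : VRel SimR v₂ v₃) : VRel CR v₁ v₃ := by
  rcases v₁ with l | n | p <;> rcases v₂ with l' | n' | p' <;>
    rcases v₃ with l'' | n'' | p'' <;> simp_all [VRel]
  exact h1.comp h2

theorem SRel_comp {s₁ s₂ s₃ : St Loc}
    (h1 : SRel CR s₁ s₂) (h2 : SRel SimR s₂ s₃) : SRel CR s₁ s₃ := by
  intro l
  rcases h1 l with ⟨a1, a2⟩ | ⟨v, v', a1, a2, hv⟩ <;>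
    rcases h2 l with ⟨b1, b2⟩ | ⟨w, w', b1, b2, hw⟩
  · exact Or.inl ⟨a1, b2⟩
  · rw [a2] at b1; cases b1
  · rw [a2] at b1; cases b1
  · rw [a2] at b1; injection b1 with hb; subst hb
    exact Or.inr ⟨v, w', a1, b2, VRel_comp hv hw⟩

/-! ## Lifting weak transitions through evaluation contexts -/

theorem Wk_lift {F : Wr Loc → Wr Loc}
    (hτ : ∀ {c d : Wr Loc}, WTr c (.tau d) → WTr (F c) (.tau (F d)))
    (hσ : ∀ {c d : Wr Loc} {s}, WTr c (.out s d) → WTr (F c) (.out s (F d))) :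
    ∀ {c d : Wr Loc}, Wk c d → Wk (F c) (F d) := by
  intro c d h
  induction h with
  | refl => exact .refl
  | tail _ hstep ih =>
      rcases hstep with h | ⟨s, h⟩
      · exact ih.tail (Or.inl (hτ h))
      · exact ih.tail (Or.inr ⟨s, hσ h⟩)

theorem Wk_seq {c d : Wr Loc} (q : Rd Loc) (h : Wk c d) :
    Wk (.seqW c q) (.seqW d q) :=
  Wk_lift (fun h => .seqTau h) (fun h => .seqOut h) h

theorem Wk_assign {c d : Wr Loc} (e : RExp Loc) (h : Wk c d) :
    Wk (.assignW e c) (.assignW e d) :=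
  Wk_lift (fun h => .asgTau h) (fun h => .asgOut h) h

theorem Wk_ref {c d : Wr Loc} (h : Wk c d) : Wk (.refW c) (.refW d) :=
  Wk_lift (fun h => .refTau h) (fun h => .refOut h) h

/-! ## The key lemma: transport of reader steps along the closure -/

theorem key : ∀ {p p' : Rd Loc}, CR p p' → ∀ {s s' : St Loc} {c : Wr Loc},
    SRel CR s s' → rstep p s = some c →
    ∃ d, rstep p' s' = some d ∧ CW c d := by
  intro p p' h
  induction h with
  | skip =>
      intro s s' c hs hc
      simp [rstep] at hc; subst hc
      exact ⟨.retS s', by simp [rstep], .retS hs⟩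
  | expr e =>
      intro s s' c hs hc
      rcases eev_rel hs e with ⟨h1, h2⟩ | ⟨v, v', h1, h2, hv⟩
      · simp [rstep, h1] at hc
      · rcases v with l | n | r <;> rcases v' with l' | n' | r' <;> simp [VRel] at hv
        · subst hv
          simp [rstep, h1] at hc; subst hc
          refine ⟨.retV (.inl l) s', by simp [rstep, h2], .retV ?_ hs⟩
          simp [VRel]
        · subst hv
          simp [rstep, h1] at hc; subst hc
          refine ⟨.retV (.inr (.inl n)) s', by simp [rstep, h2], .retV ?_ hs⟩
          simp [VRel]
        · simp [rstep, h1] at hc; subst hc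
          exact ⟨.outW s' (.runW r' s'), by simp [rstep, h2], .outW hs (.runW hv hs)⟩
  | seq hp hq ihp ihq =>
      intro s s' c hs hc
      simp [rstep] at hc; subst hc
      exact ⟨_, by simp [rstep], .seqW (.runW hp hs) hq⟩
  | whileE e hp ihp =>
      intro s s' c hs hc
      rcases eev_rel hs e with ⟨h1, h2⟩ | ⟨v, v', h1, h2, hv⟩
      · simp [rstep, h1] at hc
      · rcases v with l | n | r <;> rcases v' with l' | n' | r' <;> simp [VRel] at hv <;>
          try simp [rstep, h1] at hc
        subst hv
        by_cases hn : n = 0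
        · subst hn
          simp [rstep, h1] at hc; subst hc
          exact ⟨_, by simp [rstep, h2], .retS hs⟩
        · simp [rstep, h1, hn] at hc; subst hc
          exact ⟨_, by simp [rstep, h2, hn],
            .outW hs (.runW (.seq hp (.whileE e hp)) hs)⟩
  | ite e hp hq ihp ihq =>
      intro s s' c hs hc
      rcases eev_rel hs e with ⟨h1, h2⟩ | ⟨v, v', h1, h2, hv⟩
      · simp [rstep, h1] at hc
      · rcases v with l | n | r <;> rcases v' with l' | n' | r' <;> simp [VRel] at hv <;>
          try simp [rstep, h1] at hc
        subst hv
        by_cases hn : n = 0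
        · subst hn
          simp [rstep, h1] at hc; subst hc
          exact ⟨_, by simp [rstep, h2], .outW hs (.runW hq hs)⟩
        · simp [rstep, h1, hn] at hc; subst hc
          exact ⟨_, by simp [rstep, h2, hn], .outW hs (.runW hp hs)⟩
  | assign e hp ihp =>
      intro s s' c hs hc
      simp [rstep] at hc; subst hc
      exact ⟨_, by simp [rstep], .assignW e (.runW hp hs)⟩
  | ref hp ihp =>
      intro s s' c hs hc
      simp [rstep] at hc; subst hc
      exact ⟨_, by simp [rstep], .refW (.runW hp hs)⟩
  | proc hp ihp =>
      intro s s' c hs hc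
      simp [rstep] at hc; subst hc
      exact ⟨_, by simp [rstep], .retV (v := .inr (.inr _)) (v' := .inr (.inr _)) hp hs⟩
  | comp hpq hsim ih =>
      intro s s' c hs hc
      obtain ⟨c₂, hc₂, hcw⟩ := ih hs hc
      obtain ⟨d, hd, hsw⟩ := sim_isSim.1 _ _ s' c₂ hsim hc₂
      exact ⟨d, hd, hcw.comp hsw⟩

/-! ## The closure is a termination simulation -/

/-- Matching requirement for each kind of label. -/
def MatchLab (d : Wr Loc) : WLab Loc → Prop
  | .tau c' => ∃ d', Wk d d' ∧ CW c' d'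
  | .out _ c' => ∃ d', Wk d d' ∧ CW c' d'
  | .dn s => ∃ s', BigS d s' ∧ SRel CR s s'
  | .dnV v s => ∃ v' s', BigV d v' s' ∧ VRel CR v v' ∧ SRel CR s s'

theorem main_sim : ∀ {c d : Wr Loc}, CW c d → ∀ lab, WTr c lab → MatchLab d lab := by
  intro c d h
  induction h with
  | seqW hc hq ih =>
      rename_i c c' q q'
      intro lab hl
      cases hl with
      | seqTau h =>
          obtain ⟨d'', hw, hcw⟩ := ih _ h
          exact ⟨_, Wk_seq q' hw, CW.seqW hcw hq⟩
      | seqOut h =>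
          obtain ⟨d'', hw, hcw⟩ := ih _ h
          exact ⟨_, Wk_seq q' hw, CW.seqW hcw hq⟩
      | seqDnV h =>
          obtain ⟨v', s', ⟨c₂, hwk, hdn⟩, hv, hs⟩ := ih _ h
          exact ⟨.runW q' s', (Wk_seq q' hwk).tail (Or.inr ⟨s', .seqDnV hdn⟩),
            CW.runW hq hs⟩
      | seqDn h =>
          obtain ⟨s', ⟨c₂, hwk, hdn⟩, hs⟩ := ih _ h
          exact ⟨.runW q' s', (Wk_seq q' hwk).tail (Or.inl (.seqDn hdn)),
            CW.runW hq hs⟩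
  | assignW e hc ih =>
      intro lab hl
      cases hl with
      | asgTau h =>
          obtain ⟨d'', hw, hcw⟩ := ih _ h
          exact ⟨_, Wk_assign e hw, CW.assignW e hcw⟩
      | asgOut h =>
          obtain ⟨d'', hw, hcw⟩ := ih _ h
          exact ⟨_, Wk_assign e hw, CW.assignW e hcw⟩
      | asgDn he h =>
          rename_i c' v s l
          obtain ⟨v', s', ⟨c₂, hwk, hdn⟩, hv, hs⟩ := ih _ h
          have he' : eev s' e = some (.inl l) := by
            rcases eev_rel hs e with ⟨h1, h2⟩ | ⟨w, w', h1, h2, hw⟩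
            · rw [he] at h1; cases h1
            · rw [he] at h1; injection h1 with h1; subst h1
              rcases w' with l' | n' | p' <;> simp [VRel] at hw
              subst hw; exact h2
          exact ⟨updS s' l v', ⟨.assignW e c₂, Wk_assign e hwk, .asgDn he' hdn⟩,
            SRel_updS hs hv l⟩
  | refW hc ih =>
      intro lab hl
      cases hl with
      | refTau h =>
          obtain ⟨d'', hw, hcw⟩ := ih _ h
          exact ⟨_, Wk_ref hw, CW.refW hcw⟩
      | refOut h =>
          obtain ⟨d'', hw, hcw⟩ := ih _ h
          exact ⟨_, Wk_ref hw, CW.refW hcw⟩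
      | refDn h hnone =>
          rename_i c' v s l
          obtain ⟨v', s', ⟨c₂, hwk, hdn⟩, hv, hs⟩ := ih _ h
          have hnone' : s' l = none := by
            rcases hs l with ⟨h1, h2⟩ | ⟨w, w', h1, h2, hw⟩
            · exact h2
            · rw [hnone] at h1; cases h1
          refine ⟨.inl l, updS s' l v', ⟨.refW c₂, Wk_ref hwk, .refDn hdn hnone'⟩,
            rfl, SRel_updS hs hv l⟩
  | outW hs hc =>
      intro lab hl
      cases hl with
      | outW => exact ⟨_, Relation.ReflTransGen.single (Or.inr ⟨_, .outW⟩), hc⟩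
  | runW hp hs =>
      intro lab hl
      cases hl with
      | runW hst =>
          obtain ⟨d, hd, hcw⟩ := key hp hs hst
          exact ⟨d, Relation.ReflTransGen.single (Or.inl (.runW hd)), hcw⟩
  | retV hv hs =>
      intro lab hl
      cases hl with
      | retV => exact ⟨_, _, ⟨_, .refl, .retV⟩, hv, hs⟩
  | retS hs =>
      intro lab hl
      cases hl with
      | retS => exact ⟨_, ⟨_, .refl, .retS⟩, hs⟩
  | comp hc hsim ih =>
      intro lab hl
      rcases lab with c' | ⟨s, c'⟩ | s | ⟨v, s⟩
      · obtain ⟨c₂, hwk, hcw⟩ := ih _ hl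
        obtain ⟨d₂, hwd, hsim₂⟩ := simW_wk hsim hwk
        exact ⟨d₂, hwd, hcw.comp hsim₂⟩
      · obtain ⟨c₂, hwk, hcw⟩ := ih _ hl
        obtain ⟨d₂, hwd, hsim₂⟩ := simW_wk hsim hwk
        exact ⟨d₂, hwd, hcw.comp hsim₂⟩
      · obtain ⟨s₂, hb, hsr⟩ := ih _ hl
        obtain ⟨s₃, hb', hsr'⟩ := simW_bigS hsim hb
        exact ⟨s₃, hb', SRel_comp hsr hsr'⟩
      · obtain ⟨v₂, s₂, hb, hv, hsr⟩ := ih _ hl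
        obtain ⟨v₃, s₃, hb', hv', hsr'⟩ := simW_bigV hsim hb
        exact ⟨v₃, s₃, hb', VRel_comp hv hv', SRel_comp hsr hsr'⟩

theorem CRCW_isSim : IsTermSim (CR (Loc := Loc)) CW := by
  refine ⟨?_, ?_, ?_, ?_⟩
  · intro p q s c h hst
    exact key h (SRel_CR_refl s) hst
  · intro c d c' h hst
    rcases hst with h' | ⟨s, h'⟩
    · exact main_sim h _ h'
    · exact main_sim h _ h'
  · intro c d s h hst
    exact main_sim h _ hst
  · intro c d v s h hst
    exact main_sim h _ hst

theorem CR_simR {p q : Rd Loc} (h : CR p q) : SimR p q := ⟨_, _, CRCW_isSim, h⟩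
theorem CW_simW {c d : Wr Loc} (h : CW c d) : SimW c d := ⟨_, _, CRCW_isSim, h⟩

theorem simR_le_CR' : ∀ p q : Rd Loc, SimR p q → CR p q := fun _ _ => simR_le_CR

theorem VRel_eqv_swap {v v' : Val Loc} (h : VRel EqvR v v') : VRel SimR v' v := by
  rcases v with l | n | p <;> rcases v' with l' | n' | p' <;> simp_all [VRel]
  exact h.2

theorem SRel_eqv_swap {s s' : St Loc} (h : SRel EqvR s s') : SRel SimR s' s := by
  intro l
  rcases h l with ⟨h1, h2⟩ | ⟨v, v', h1, h2, hv⟩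
  · exact Or.inl ⟨h2, h1⟩
  · exact Or.inr ⟨v', v, h2, h1, VRel_eqv_swap hv⟩

theorem SRel_sim_of_eqv {s s' : St Loc} (h : SRel EqvR s s') : SRel SimR s s' :=
  SRel_mono (fun _ _ hh => hh.1) h

theorem VRel_sim_of_eqv {v v' : Val Loc} (h : VRel EqvR v v') : VRel SimR v v' :=
  VRel_mono (fun _ _ hh => hh.1) h

theorem sim_congr : IsCongrRef (SimR (Loc := Loc)) SimW := by
  have tS : ∀ {s s' : St Loc}, SRel SimR s s' → SRel CR s s' :=
    fun h => SRel_mono simR_le_CR' h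
  have tV : ∀ {v v' : Val Loc}, VRel SimR v v' → VRel CR v v' :=
    fun h => VRel_mono simR_le_CR' h
  refine ⟨?_, ?_, ?_, ?_, ?_, ?_, ?_, ?_, ?_, ?_, ?_, ?_, ?_, ?_, ?_⟩
  · exact fun p p' q q' h1 h2 => CR_simR (.seq (simR_le_CR h1) (simR_le_CR h2))
  · exact fun e p p' h => CR_simR (.whileE e (simR_le_CR h))
  · exact fun e p p' q q' h1 h2 =>
      CR_simR (.ite e (simR_le_CR h1) (simR_le_CR h2))
  · exact fun e p p' h => CR_simR (.assign e (simR_le_CR h))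
  · exact fun p p' h => CR_simR (.ref (simR_le_CR h))
  · exact fun p p' h => CR_simR (.proc (simR_le_CR h))
  · exact CR_simR .skip
  · exact fun e => CR_simR (.expr e)
  · exact fun c c' q q' h1 h2 => CW_simW (.seqW (simW_le_CW h1) (simR_le_CR h2))
  · exact fun e c c' h => CW_simW (.assignW e (simW_le_CW h))
  · exact fun c c' h => CW_simW (.refW (simW_le_CW h))
  · exact fun s s' c c' hs h => CW_simW (.outW (tS hs) (simW_le_CW h))
  · exact fun p p' s s' hp hs => CW_simW (.runW (simR_le_CR hp) (tS hs))
  · exact fun v v' s s' hv hs => CW_simW (.retV (tV hv) (tS hs))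
  · exact fun s s' hs => CW_simW (.retS (tS hs))

theorem termination_similarity_congruence' :
    IsCongrRef (SimR (Loc := Loc)) SimW ∧ IsCongrRef (EqvR (Loc := Loc)) EqvW := by
  refine ⟨sim_congr, ?_⟩
  obtain ⟨c1, c2, c3, c4, c5, c6, c7, c8, c9, c10, c11, c12, c13, c14, c15⟩ :=
    sim_congr (Loc := Loc)
  refine ⟨?_, ?_, ?_, ?_, ?_, ?_, ?_, ?_, ?_, ?_, ?_, ?_, ?_, ?_, ?_⟩
  · exact fun p p' q q' h1 h2 =>
      ⟨c1 _ _ _ _ h1.1 h2.1, c1 _ _ _ _ h1.2 h2.2⟩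
  · exact fun e p p' h => ⟨c2 e _ _ h.1, c2 e _ _ h.2⟩
  · exact fun e p p' q q' h1 h2 =>
      ⟨c3 e _ _ _ _ h1.1 h2.1, c3 e _ _ _ _ h1.2 h2.2⟩
  · exact fun e p p' h => ⟨c4 e _ _ h.1, c4 e _ _ h.2⟩
  · exact fun p p' h => ⟨c5 _ _ h.1, c5 _ _ h.2⟩
  · exact fun p p' h => ⟨c6 _ _ h.1, c6 _ _ h.2⟩
  · exact ⟨c7, c7⟩
  · exact fun e => ⟨c8 e, c8 e⟩
  · exact fun c c' q q' h1 h2 =>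
      ⟨c9 _ _ _ _ h1.1 h2.1, c9 _ _ _ _ h1.2 h2.2⟩
  · exact fun e c c' h => ⟨c10 e _ _ h.1, c10 e _ _ h.2⟩
  · exact fun c c' h => ⟨c11 _ _ h.1, c11 _ _ h.2⟩
  · exact fun s s' c c' hs h =>
      ⟨c12 _ _ _ _ (SRel_sim_of_eqv hs) h.1, c12 _ _ _ _ (SRel_eqv_swap hs) h.2⟩
  · exact fun p p' s s' hp hs =>
      ⟨c13 _ _ _ _ hp.1 (SRel_sim_of_eqv hs), c13 _ _ _ _ hp.2 (SRel_eqv_swap hs)⟩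
  · exact fun v v' s s' hv hs =>
      ⟨c14 _ _ _ _ (VRel_sim_of_eqv hv) (SRel_sim_of_eqv hs),
       c14 _ _ _ _ (VRel_eqv_swap hv) (SRel_eqv_swap hs)⟩
  · exact fun s s' hs => ⟨c15 _ _ (SRel_sim_of_eqv hs), c15 _ _ (SRel_eqv_swap hs)⟩

end Congr

/-- termination similarity `≼` is a congruence on `(Rd, Wr)`, and
hence so is its symmetrization `≡ = ≼ ∩ ≽`: both are compatible with all
constructors of Ref². -/
theorem termination_similarity_congruence :
    IsCongrRef (SimR (Loc := Loc)) SimW ∧ IsCongrRef (EqvR (Loc := Loc)) EqvW :=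
  termination_similarity_congruence'

end RefLang
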